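/- Let α > −1 and let z be a real with 0 < z ≤ min(2, √(3(α+1))). Then J_α(z) ≥ (z/2)^α / (4·Γ(α+1)), where J_α is the Bessel function of the first kind of order α. (In particular J_α(z) > 0 on this range; this is the quantitative lower bound established in the paper's proof of its Bessel estimate for small arguments.) -/

import Mathlib

/-- The Bessel function of the first kind of order `α`, defined by its power
series (with real powers of the positive base `z/2`). -/
noncomputable def besselJ (α z : ℝ) : ℝ :=
  ∑' ν : ℕ, (-1 : ℝ) ^ ν / ((ν.factorial : ℝ) * Real.Gamma ((ν : ℝ) + α + 1)) *
    (z / 2) ^ (2 * (ν : ℝ) + α)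

/-!
Writing `x = (z/2)^2`, we have `J_α(z) = (z/2)^α ∑ (-1)^n b_n` with
`b_n = x^n / (n! Γ(n+α+1))`. Since `b_{n+1} = b_n · x / ((n+1)(n+α+1))`, the sequence `b` is
antitone as soon as `x ≤ α + 1`, so the alternating series is bounded below by its
first two terms, `b_0 - b_1 = (1 - x/(α+1)) / Γ(α+1)`. For `z ≤ √(3(α+1))` this is at least
`1 / (4 Γ(α+1))`.
-/

open Finset Filter

noncomputable def besselTerm (α x : ℝ) (n : ℕ) : ℝ :=
  x ^ n / ((n.factorial : ℝ) * Real.Gamma ((n : ℝ) + α + 1))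

section besselTerm

variable {α x : ℝ}

lemma natCast_add_add_one_pos (hα : -1 < α) (n : ℕ) : 0 < (n : ℝ) + α + 1 := by
  have : (0 : ℝ) ≤ n := n.cast_nonneg
  linarith

lemma besselJ_eq_rpow_mul_tsum {z : ℝ} (hz : 0 < z) :
    besselJ α z = (z / 2) ^ α * ∑' n, (-1) ^ n * besselTerm α ((z / 2) ^ 2) n := by
  rw [← tsum_mul_left, besselJ]
  congr 1 with n
  have hpow : (z / 2) ^ (2 * (n : ℝ) + α) = ((z / 2) ^ 2) ^ n * (z / 2) ^ α := by
    rw [Real.rpow_add (by positivity), ← pow_mul, ← Real.rpow_natCast]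
    push_cast
    ring_nf
  rw [hpow, besselTerm]
  ring

lemma besselTerm_zero : besselTerm α x 0 = 1 / Real.Gamma (α + 1) := by
  simp [besselTerm]

lemma besselTerm_succ (hα : -1 < α) (n : ℕ) :
    besselTerm α x (n + 1) = x / ((n + 1) * (n + α + 1)) * besselTerm α x n := by
  have hn := (natCast_add_add_one_pos hα n).ne'
  have hΓ : Real.Gamma (((n + 1 : ℕ) : ℝ) + α + 1) = (n + α + 1) * Real.Gamma (n + α + 1) := by
    rw [← Real.Gamma_add_one hn]
    push_cast
    ring_nf
  rw [besselTerm, besselTerm, hΓ, Nat.factorial_succ]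
  push_cast
  field_simp
  ring

lemma besselTerm_nonneg (hα : -1 < α) (hx : 0 ≤ x) (n : ℕ) : 0 ≤ besselTerm α x n := by
  have : 0 < Real.Gamma (n + α + 1) := Real.Gamma_pos_of_pos (natCast_add_add_one_pos hα n)
  unfold besselTerm
  positivity

lemma summable_besselTerm (hα : -1 < α) (hx : 0 ≤ x) : Summable (besselTerm α x) := by
  refine summable_of_ratio_norm_eventually_le (r := 1 / 2) (by norm_num) ?_
  filter_upwards [eventually_ge_atTop 1, eventually_ge_atTop ⌈2 * x⌉₊] with n hn1 hnx
  have hn1 : (1 : ℝ) ≤ n := by exact_mod_cast hn1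
  have hnx : 2 * x ≤ n := Nat.ceil_le.mp hnx
  have hratio : x / ((n + 1) * (n + α + 1)) ≤ 1 / 2 := by
    have := natCast_add_add_one_pos hα n
    rw [div_le_iff₀ (by positivity)]
    nlinarith
  rw [Real.norm_of_nonneg (besselTerm_nonneg hα hx _),
    Real.norm_of_nonneg (besselTerm_nonneg hα hx _), besselTerm_succ hα]
  exact mul_le_mul_of_nonneg_right hratio (besselTerm_nonneg hα hx n)

lemma antitone_besselTerm (hα : -1 < α) (hx : 0 ≤ x) (hxα : x ≤ α + 1) :
    Antitone (besselTerm α x) := by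
  refine antitone_nat_of_succ_le fun n ↦ ?_
  have hratio : x / ((n + 1) * (n + α + 1)) ≤ 1 := by
    have := natCast_add_add_one_pos hα n
    rw [div_le_one (by positivity)]
    nlinarith [n.cast_nonneg (α := ℝ)]
  rw [besselTerm_succ hα]
  exact mul_le_of_le_one_left (besselTerm_nonneg hα hx n) hratio

lemma one_sub_div_div_gamma_le_tsum_besselTerm (hα : -1 < α) (hx : 0 ≤ x) (hxα : x ≤ α + 1) :
    (1 - x / (α + 1)) / Real.Gamma (α + 1) ≤ ∑' n, (-1) ^ n * besselTerm α x n := by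
  have hpair := (antitone_besselTerm hα hx hxα).alternating_series_le_tendsto
    (summable_besselTerm hα hx).tendsto_alternating_series_tsum 1
  refine le_of_eq_of_le ?_ hpair
  rw [Nat.mul_one, sum_range_succ, sum_range_one, besselTerm_succ hα 0, besselTerm_zero]
  push_cast
  field_simp
  ring

end besselTerm

/-- The quantitative lower bound on `J_α(z)` for small arguments:
`J_α(z) ≥ (z/2)^α / (4 Γ(α+1))` for `0 < z ≤ min(2, √(3(α+1)))`. -/
theorem stmt_14 (α : ℝ) (hα : -1 < α) (z : ℝ) (hz : 0 < z)
    (hz2 : z ≤ min 2 (Real.sqrt (3 * (α + 1)))) :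
    (z / 2) ^ α / (4 * Real.Gamma (α + 1)) ≤ besselJ α z := by
  have hα1 : 0 < α + 1 := by linarith
  have hzα : z ≤ Real.sqrt (3 * (α + 1)) := hz2.trans (min_le_right _ _)
  set x := (z / 2) ^ 2 with hx
  have hxα : 4 * x ≤ 3 * (α + 1) := by
    have := Real.sq_sqrt (by positivity : (0 : ℝ) ≤ 3 * (α + 1))
    rw [hx]; nlinarith
  have hquarter : 1 / 4 ≤ 1 - x / (α + 1) := by
    rw [le_sub_comm, div_le_iff₀ hα1]; linarith
  have hΓ : 0 < Real.Gamma (α + 1) := Real.Gamma_pos_of_pos hα1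
  rw [besselJ_eq_rpow_mul_tsum hz]
  calc (z / 2) ^ α / (4 * Real.Gamma (α + 1))
      = (z / 2) ^ α * (1 / 4 / Real.Gamma (α + 1)) := by ring
    _ ≤ (z / 2) ^ α * ((1 - x / (α + 1)) / Real.Gamma (α + 1)) := by gcongr
    _ ≤ (z / 2) ^ α * ∑' n, (-1) ^ n * besselTerm α x n := by
      gcongr
      exact one_sub_div_div_gamma_le_tsum_besselTerm hα (sq_nonneg _) (by linarith)
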